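/- arXiv:1810.09887 — 2 statements merged into one kernel-verified Lean document; each statement's English description precedes it below -/
import Mathlib

section
/- For a uniformly random 231-avoiding permutation of size N, the probability that any fixed k-positional strategy wins is C_{N-1}/C_N, and this probability tends to 1/4 as N → ∞. -/
def IsLTRMax {N : ℕ} (p : Equiv.Perm (Fin N)) (j : Fin N) : Prop :=
  ∀ i : Fin N, i < j → p i < p j

def Winnable (N k : ℕ) (p : Equiv.Perm (Fin N)) : Prop :=
  ∃ j : Fin N, k ≤ (j : ℕ) ∧ IsLTRMax p j ∧
    (∀ i : Fin N, k ≤ (i : ℕ) → IsLTRMax p i → j ≤ i) ∧ ((p j : ℕ) = N - 1)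

def Avoids231 {N : ℕ} (p : Equiv.Perm (Fin N)) : Prop :=
  ¬ ∃ i j l : Fin N, i < j ∧ j < l ∧ p l < p i ∧ p i < p j

/-! A 231-avoiding permutation with its maximum at position `m` is exactly `A`, then the
maximum, then `B` shifted above `A`, with `A` and `B` 231-avoiding of sizes `m` and `N - 1 - m`;
this gives the Catalan recurrence for the number of 231-avoiders. The `k`-positional strategy
wins on such a permutation iff `k ≤ m` and every left-to-right maximum of `A` lies before `k`.
Writing `h(m, k)` for the number of such `A`, the number of winnable permutations is
`∑_{m ≥ k} h(m, k) C_{N-1-m}`. Since `h(m, k + 1) - h(m, k)` counts the `A` with maximum at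
position `k`, namely `C_k C_{m-1-k}`, this sum does not depend on `k`, and for `k = 0` it is
`C_{N-1}`. The limit follows from `C_n / C_{n+1} = (n + 2) / (2 (2n + 1))`. -/

open Equiv Finset

section MaxPosition

variable {N : ℕ} {p : Perm (Fin N)} {i j : Fin N}

lemma apply_lt_of_val_eq (hj : (p j : ℕ) = N - 1) (hij : i ≠ j) : p i < p j := by
  have := Fin.val_ne_of_ne (p.injective.ne hij)
  rw [Fin.lt_def]
  omega

lemma isLTRMax_of_val_eq (hj : (p j : ℕ) = N - 1) : IsLTRMax p j :=
  fun _ hi => apply_lt_of_val_eq hj hi.ne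

lemma IsLTRMax.le_of_val_eq (hi : IsLTRMax p i) (hj : (p j : ℕ) = N - 1) : i ≤ j := by
  by_contra! hji
  have := hi j hji
  omega

lemma winnable_iff_of_val_eq (k : ℕ) (hj : (p j : ℕ) = N - 1) :
    Winnable N k p ↔ k ≤ j ∧ ∀ i, IsLTRMax p i → i < j → (i : ℕ) < k := by
  constructor
  · rintro ⟨j', hkj', -, hfirst, hj'⟩
    obtain rfl : j' = j := p.injective (Fin.ext (hj'.trans hj.symm))
    refine ⟨hkj', fun i hi hij => ?_⟩
    by_contra! hki
    exact absurd (hfirst i hki hi) (not_le.mpr hij)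
  · rintro ⟨hkj, hbefore⟩
    refine ⟨j, hkj, isLTRMax_of_val_eq hj, fun i hki hi => ?_, hj⟩
    by_contra! hij
    exact absurd (hbefore i hi hij) (not_lt.mpr hki)

lemma forall_isLTRMax_lt_iff_of_val_eq (k : ℕ) (hj : (p j : ℕ) = N - 1) :
    (∀ i, IsLTRMax p i → (i : ℕ) < k) ↔ (j : ℕ) < k :=
  ⟨fun h => h j (isLTRMax_of_val_eq hj),
    fun h _ hi => lt_of_le_of_lt (Fin.le_def.mp (hi.le_of_val_eq hj)) h⟩

end MaxPosition

lemma Equiv.Perm.val_lt_of_forall_le_lt {N : ℕ} (p : Perm (Fin N)) {i j : Fin N}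
    (h : ∀ l, j ≤ l → p i < p l) : (p i : ℕ) < j := by
  have hsub : (Ici j).map p.toEmbedding ⊆ Ioi (p i) := by
    intro v hv
    obtain ⟨l, hl, rfl⟩ := mem_map.mp hv
    exact mem_Ioi.mpr (h l (mem_Ici.mp hl))
  have := card_le_card hsub
  rw [card_map, Fin.card_Ici, Fin.card_Ioi] at this
  omega

lemma Equiv.Perm.le_val_of_forall_lt_lt {N : ℕ} (p : Perm (Fin N)) {j l : Fin N}
    (h : ∀ i, i < j → p i < p l) : (j : ℕ) ≤ p l := by
  have hsub : (Iio j).map p.toEmbedding ⊆ Iio (p l) := by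
    intro v hv
    obtain ⟨i, hi, rfl⟩ := mem_map.mp hv
    exact mem_Iio.mpr (h i (mem_Iio.mp hi))
  simpa using card_le_card hsub

lemma card_eq_sum_card_val_eq_last {N : ℕ} (P : Perm (Fin (N + 1)) → Prop) :
    Nat.card {p // P p} =
      ∑ j : Fin (N + 1), Nat.card {p : Perm (Fin (N + 1)) // P p ∧ (p j : ℕ) = N} := by
  classical
  simp only [Nat.card_eq_fintype_card, Fintype.card_subtype]
  rw [card_eq_sum_card_fiberwise (f := fun p : Perm (Fin (N + 1)) => p.symm (Fin.last N))
    (t := univ) (fun _ _ => mem_coe.mpr (mem_univ _))]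
  refine sum_congr rfl fun j _ => congrArg card ?_
  ext p
  simp only [mem_filter, mem_univ, true_and]
  rw [Equiv.symm_apply_eq, Fin.ext_iff, Fin.val_last, eq_comm]

lemma Avoids231.lt_of_lt_of_lt {N : ℕ} {p : Perm (Fin N)} (hp : Avoids231 p) {i j l : Fin N}
    (hij : i < j) (hjl : j < l) (hi : p i < p j) : p i < p l :=
  lt_of_le_of_ne (not_lt.mp fun hli => hp ⟨i, j, l, hij, hjl, hli, hi⟩)
    (p.injective.ne (hij.trans hjl).ne)

lemma Avoids231.val_lt_of_lt_of_val_eq {N : ℕ} {p : Perm (Fin N)} (hp : Avoids231 p) {i c : Fin N}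
    (hc : (p c : ℕ) = N - 1) (hic : i < c) : (p i : ℕ) < c := by
  refine p.val_lt_of_forall_le_lt fun l hcl => ?_
  rcases hcl.lt_or_eq with hcl | rfl
  · exact hp.lt_of_lt_of_lt hic hcl (apply_lt_of_val_eq hc hic.ne)
  · exact apply_lt_of_val_eq hc hic.ne

lemma Avoids231.le_val_of_lt_of_val_eq {N : ℕ} {p : Perm (Fin N)} (hp : Avoids231 p) {c l : Fin N}
    (hc : (p c : ℕ) = N - 1) (hcl : c < l) : (c : ℕ) ≤ p l :=
  p.le_val_of_forall_lt_lt fun _ hi => hp.lt_of_lt_of_lt hi hcl (apply_lt_of_val_eq hc hi.ne)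

lemma Avoids231.of_strictMono {M N : ℕ} {p : Perm (Fin N)} (hp : Avoids231 p) {q : Perm (Fin M)}
    {f : Fin M → Fin N} (hf : StrictMono f) (hq : ∀ x y, q x < q y ↔ p (f x) < p (f y)) :
    Avoids231 q := fun ⟨i, j, l, hij, hjl, hli, hij'⟩ =>
  hp ⟨f i, f j, f l, hf hij, hf hjl, (hq l i).mp hli, (hq i j).mp hij'⟩

section MaxJoin

variable {m n : ℕ} (A : Perm (Fin m)) (B : Perm (Fin n)) {i : Fin (m + 1 + n)}

def maxJoinFun (i : Fin (m + 1 + n)) : Fin (m + 1 + n) :=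
  if h : (i : ℕ) < m then Fin.castLE (by omega) (A ⟨i, h⟩)
  else if h' : (i : ℕ) = m then ⟨m + n, by omega⟩
  else ⟨m + B ⟨i - (m + 1), by omega⟩, (Nat.add_lt_add_left (Fin.isLt _) m).trans (by omega)⟩

lemma maxJoinFun_of_lt (h : (i : ℕ) < m) : (maxJoinFun A B i : ℕ) = A ⟨i, h⟩ := by
  simp [maxJoinFun, h]

lemma maxJoinFun_of_eq (h : (i : ℕ) = m) : (maxJoinFun A B i : ℕ) = m + n := by
  simp [maxJoinFun, h]

lemma maxJoinFun_of_gt (h : m < (i : ℕ)) :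
    (maxJoinFun A B i : ℕ) = m + B ⟨i - (m + 1), by omega⟩ := by
  simp [maxJoinFun, h.not_gt, h.ne']

lemma maxJoinFun_lt_iff : (maxJoinFun A B i : ℕ) < m ↔ (i : ℕ) < m := by
  rcases lt_trichotomy (i : ℕ) m with h | h | h
  · simp [maxJoinFun_of_lt A B h, h]
  · simp [maxJoinFun_of_eq A B h, h]
  · simp [maxJoinFun_of_gt A B h, h.not_gt]

lemma maxJoinFun_eq_iff : (maxJoinFun A B i : ℕ) = m + n ↔ (i : ℕ) = m := by
  rcases lt_trichotomy (i : ℕ) m with h | h | h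
  · simp only [maxJoinFun_of_lt A B h, h.ne, iff_false]
    have := (A ⟨i, h⟩).isLt
    omega
  · simp [maxJoinFun_of_eq A B h, h]
  · simp [maxJoinFun_of_gt A B h, h.ne', (Fin.isLt _).ne]

lemma maxJoinFun_injective : Function.Injective (maxJoinFun A B) := by
  intro i i' h
  have hlt : (i : ℕ) < m ↔ (i' : ℕ) < m := by
    rw [← maxJoinFun_lt_iff A B, h, maxJoinFun_lt_iff]
  have heq : (i : ℕ) = m ↔ (i' : ℕ) = m := by
    rw [← maxJoinFun_eq_iff A B, h, maxJoinFun_eq_iff]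
  rw [Fin.ext_iff] at h ⊢
  rcases lt_trichotomy (i : ℕ) m with hi | hi | hi
  · rw [maxJoinFun_of_lt A B hi, maxJoinFun_of_lt A B (hlt.mp hi)] at h
    simpa using A.injective (Fin.ext h)
  · omega
  · have hi' : m < (i' : ℕ) := by omega
    rw [maxJoinFun_of_gt A B hi, maxJoinFun_of_gt A B hi'] at h
    have := congrArg Fin.val (B.injective (Fin.ext (Nat.add_left_cancel h)))
    simp only at this
    omega

noncomputable def maxJoin : Perm (Fin (m + 1 + n)) :=
  Equiv.ofBijective _ (Finite.injective_iff_bijective.mp (maxJoinFun_injective A B))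

variable {A B}

lemma maxJoin_apply_of_lt (h : (i : ℕ) < m) : (maxJoin A B i : ℕ) = A ⟨i, h⟩ :=
  maxJoinFun_of_lt A B h

lemma maxJoin_apply_of_eq (h : (i : ℕ) = m) : (maxJoin A B i : ℕ) = m + n :=
  maxJoinFun_of_eq A B h

lemma maxJoin_apply_of_gt (h : m < (i : ℕ)) :
    (maxJoin A B i : ℕ) = m + B ⟨i - (m + 1), by omega⟩ :=
  maxJoinFun_of_gt A B h

end MaxJoin

def LTRMaximaBefore {m : ℕ} (k : ℕ) (A : Perm (Fin m)) : Prop :=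
  ∀ i, IsLTRMax A i → (i : ℕ) < k

section MaxJoinProperties

variable {m n : ℕ} {A : Perm (Fin m)} {B : Perm (Fin n)}

lemma maxJoin_castLE (x : Fin m) :
    (maxJoin A B (Fin.castLE (by omega) x) : ℕ) = A x := by
  rw [maxJoin_apply_of_lt (by simp)]
  rfl

lemma maxJoin_natAdd (y : Fin n) : (maxJoin A B (Fin.natAdd (m + 1) y) : ℕ) = m + B y := by
  rw [maxJoin_apply_of_gt (by simp only [Fin.val_natAdd]; omega)]
  simp

lemma avoids231_maxJoin_iff : Avoids231 (maxJoin A B) ↔ Avoids231 A ∧ Avoids231 B := by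
  constructor
  · intro hp
    refine ⟨hp.of_strictMono (Fin.strictMono_castLE (by omega)) fun x y => ?_,
      hp.of_strictMono (Fin.strictMono_natAdd _) fun x y => ?_⟩
    · simp only [Fin.lt_def, maxJoin_castLE]
    · simp only [Fin.lt_def, maxJoin_natAdd, Nat.add_lt_add_iff_left]
  · rintro ⟨hA, hB⟩ ⟨i, j, l, hij, hjl, hli, hij'⟩
    rw [Fin.lt_def] at hij hjl hli hij'
    rcases lt_or_ge (l : ℕ) m with hl | hl
    · rw [maxJoin_apply_of_lt hl, maxJoin_apply_of_lt (by omega)] at hli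
      rw [maxJoin_apply_of_lt (by omega), maxJoin_apply_of_lt (by omega)] at hij'
      exact hA ⟨⟨i, by omega⟩, ⟨j, by omega⟩, ⟨l, hl⟩, hij, hjl, hli, hij'⟩
    · have hpl : m ≤ (maxJoin A B l : ℕ) := by
        rcases hl.lt_or_eq with hl | hl
        · rw [maxJoin_apply_of_gt hl]
          omega
        · rw [maxJoin_apply_of_eq hl.symm]
          omega
      rcases lt_trichotomy (i : ℕ) m with hi | hi | hi
      · rw [maxJoin_apply_of_lt hi] at hli
        have := (A ⟨i, hi⟩).isLt
        omega
      · rw [maxJoin_apply_of_eq hi] at hij'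
        have := (maxJoin A B j).isLt
        omega
      · rw [maxJoin_apply_of_gt hi, maxJoin_apply_of_gt (by omega)] at hli hij'
        exact hB ⟨⟨i - (m + 1), by omega⟩, ⟨j - (m + 1), by omega⟩, ⟨l - (m + 1), by omega⟩,
          Fin.mk_lt_mk.mpr (by omega), Fin.mk_lt_mk.mpr (by omega), Fin.lt_def.mpr (by omega),
          Fin.lt_def.mpr (by omega)⟩

lemma isLTRMax_maxJoin_castLE_iff (x : Fin m) :
    IsLTRMax (maxJoin A B) (Fin.castLE (by omega) x) ↔ IsLTRMax A x := by
  constructor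
  · intro h y hy
    have := h (Fin.castLE (by omega) y) (Fin.strictMono_castLE _ hy)
    rwa [Fin.lt_def, maxJoin_castLE, maxJoin_castLE, ← Fin.lt_def] at this
  · intro h i hi
    rw [Fin.lt_def, Fin.val_castLE] at hi
    have hi' : (i : ℕ) < m := hi.trans x.isLt
    have := h ⟨i, hi'⟩ (Fin.lt_def.mpr hi)
    rwa [Fin.lt_def, maxJoin_castLE, maxJoin_apply_of_lt hi', ← Fin.lt_def]

lemma winnable_maxJoin_iff (k : ℕ) :
    Winnable (m + 1 + n) k (maxJoin A B) ↔ k ≤ m ∧ LTRMaximaBefore k A := by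
  have hmax : (maxJoin A B ⟨m, by omega⟩ : ℕ) = m + 1 + n - 1 := by
    rw [maxJoin_apply_of_eq rfl]
    omega
  rw [winnable_iff_of_val_eq k hmax]
  refine and_congr_right fun _ => ⟨fun h x hx => ?_, fun h i hi him => ?_⟩
  · exact h _ ((isLTRMax_maxJoin_castLE_iff x).mpr hx) (Fin.lt_def.mpr x.isLt)
  · exact h ⟨i, him⟩ ((isLTRMax_maxJoin_castLE_iff ⟨i, him⟩).mp hi)

lemma maxJoin_injective : Function.Injective fun AB : Perm (Fin m) × Perm (Fin n) =>
    maxJoin AB.1 AB.2 := by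
  rintro ⟨A, B⟩ ⟨A', B'⟩ (h : maxJoin A B = maxJoin A' B')
  rw [Prod.mk.injEq]
  refine ⟨Equiv.ext fun x => Fin.ext ?_, Equiv.ext fun y => Fin.ext ?_⟩
  · rw [← maxJoin_castLE (B := B), h, maxJoin_castLE]
  · have := maxJoin_natAdd (A := A) (B := B) y
    rw [h, maxJoin_natAdd] at this
    omega

end MaxJoinProperties

section Decomposition

variable {m n : ℕ}

lemma Avoids231.exists_maxJoin_eq {p : Perm (Fin (m + 1 + n))} (hp : Avoids231 p)
    (hmax : (p ⟨m, by omega⟩ : ℕ) = m + 1 + n - 1) : ∃ A B, maxJoin A B = p := by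
  set c : Fin (m + 1 + n) := ⟨m, by omega⟩
  have hleft (i : Fin (m + 1 + n)) (hi : (i : ℕ) < m) : (p i : ℕ) < m :=
    hp.val_lt_of_lt_of_val_eq hmax (Fin.lt_def.mpr hi)
  have hright (l : Fin (m + 1 + n)) (hl : m < (l : ℕ)) : m ≤ (p l : ℕ) ∧ (p l : ℕ) < m + n := by
    have hcl : c < l := Fin.lt_def.mpr hl
    have := Fin.lt_def.mp (apply_lt_of_val_eq hmax hcl.ne')
    exact ⟨hp.le_val_of_lt_of_val_eq hmax hcl, by omega⟩
  have hnat (y : Fin n) : m < (Fin.natAdd (m + 1) y : ℕ) := by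
    simp only [Fin.val_natAdd]
    omega
  let fA (x : Fin m) : Fin m := ⟨p (Fin.castLE (by omega) x), hleft _ x.isLt⟩
  let fB (y : Fin n) : Fin n :=
    ⟨p (Fin.natAdd (m + 1) y) - m, by have := hright _ (hnat y); omega⟩
  have hfA : Function.Injective fA := fun x y h => by
    simp only [fA, Fin.mk.injEq] at h
    exact Fin.castLE_injective _ (p.injective (Fin.ext h))
  have hfB : Function.Injective fB := fun x y h => by
    have hx := hright _ (hnat x)
    have hy := hright _ (hnat y)
    have : (p (Fin.natAdd (m + 1) x) : ℕ) = p (Fin.natAdd (m + 1) y) := by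
      have := congrArg Fin.val h
      simp only [fB] at this
      omega
    exact Fin.natAdd_injective _ _ (p.injective (Fin.ext this))
  refine ⟨ofBijective fA (Finite.injective_iff_bijective.mp hfA),
    ofBijective fB (Finite.injective_iff_bijective.mp hfB), Equiv.ext fun i => Fin.ext ?_⟩
  rcases lt_trichotomy (i : ℕ) m with hi | hi | hi
  · rw [maxJoin_apply_of_lt hi]
    rfl
  · rw [maxJoin_apply_of_eq hi, show i = c from Fin.ext hi, hmax]
    omega
  · rw [maxJoin_apply_of_gt hi]
    have hi' : Fin.natAdd (m + 1) ⟨i - (m + 1), by omega⟩ = i := Fin.ext (by simp; omega)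
    simp only [coe_ofBijective, fB, hi']
    have := hright i hi
    omega

lemma card_eq_of_maxJoin {Q : Perm (Fin m) → Prop} {P : Perm (Fin (m + 1 + n)) → Prop}
    (hP : ∀ p, P p → Avoids231 p ∧ (p ⟨m, by omega⟩ : ℕ) = m + 1 + n - 1)
    (hPQ : ∀ A B, P (maxJoin A B) ↔ Q A ∧ Avoids231 B) :
    Nat.card {p // P p} = Nat.card {A // Q A} * Nat.card {B : Perm (Fin n) // Avoids231 B} := by
  let f (AB : {A // Q A} × {B : Perm (Fin n) // Avoids231 B}) := maxJoin AB.1.1 AB.2.1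
  have hf : Function.Injective f := by
    rintro ⟨⟨A, hA⟩, ⟨B, hB⟩⟩ ⟨⟨A', hA'⟩, ⟨B', hB'⟩⟩ h
    obtain ⟨rfl, rfl⟩ := Prod.mk.inj (maxJoin_injective (a₁ := (A, B)) (a₂ := (A', B')) h)
    rfl
  rw [← Nat.card_prod, ← Nat.card_range_of_injective hf]
  refine Nat.card_congr (Equiv.subtypeEquivRight fun p => ⟨fun hp => ?_, ?_⟩)
  · obtain ⟨A, B, rfl⟩ := (hP p hp).1.exists_maxJoin_eq (hP p hp).2
    obtain ⟨hA, hB⟩ := (hPQ A B).mp hp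
    exact ⟨(⟨A, hA⟩, ⟨B, hB⟩), rfl⟩
  · rintro ⟨⟨⟨A, hA⟩, ⟨B, hB⟩⟩, rfl⟩
    exact (hPQ A B).mpr ⟨hA, hB⟩

end Decomposition

lemma card_avoids231_val_eq_of_eq_add {N m n : ℕ} (hN : N = m + 1 + n) (j : Fin N)
    (hj : (j : ℕ) = m) :
    Nat.card {p : Perm (Fin N) // Avoids231 p ∧ (p j : ℕ) = N - 1} =
      Nat.card {A : Perm (Fin m) // Avoids231 A} * Nat.card {B : Perm (Fin n) // Avoids231 B} := by
  subst hN
  rw [show j = ⟨m, by omega⟩ from Fin.ext hj]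
  refine card_eq_of_maxJoin (fun _ hp => hp) fun A B => ?_
  rw [avoids231_maxJoin_iff, maxJoin_apply_of_eq rfl]
  exact and_iff_left (by omega)

theorem card_avoids231 (N : ℕ) : Nat.card {p : Perm (Fin N) // Avoids231 p} = catalan N := by
  induction N using Nat.strong_induction_on with
  | _ N ih =>
  rcases N with _ | N
  · rw [catalan_zero, Nat.card_eq_one_iff_unique]
    exact ⟨inferInstance, ⟨⟨1, fun ⟨i, _⟩ => i.elim0⟩⟩⟩
  · rw [card_eq_sum_card_val_eq_last, catalan_succ]
    refine sum_congr rfl fun j _ => ?_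
    refine (card_avoids231_val_eq_of_eq_add (N := N + 1) (n := N - j) (by omega) j rfl).trans ?_
    rw [ih _ (by omega), ih _ (by omega)]

noncomputable def cardAvoids231LTRMaximaBefore (m k : ℕ) : ℕ :=
  Nat.card {A : Perm (Fin m) // Avoids231 A ∧ LTRMaximaBefore k A}

lemma cardAvoids231LTRMaximaBefore_of_le {m k : ℕ} (h : m ≤ k) :
    cardAvoids231LTRMaximaBefore m k = catalan m := by
  rw [cardAvoids231LTRMaximaBefore, ← card_avoids231]
  exact Nat.card_congr (subtypeEquivRight fun A =>
    and_iff_left fun i _ => lt_of_lt_of_le i.isLt h)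

lemma cardAvoids231LTRMaximaBefore_succ_zero (m : ℕ) : cardAvoids231LTRMaximaBefore (m + 1) 0 = 0 :=
  Nat.card_eq_zero.mpr (Or.inl ⟨fun A => Nat.lt_irrefl 0 (A.2.2 0 fun i hi =>
    absurd hi (Fin.not_lt_zero i))⟩)

lemma cardAvoids231LTRMaximaBefore_succ (k d : ℕ) :
    cardAvoids231LTRMaximaBefore (k + 1 + d) (k + 1) =
      cardAvoids231LTRMaximaBefore (k + 1 + d) k + catalan k * catalan d := by
  classical
  have key (A : Perm (Fin (k + 1 + d))) :
      (Avoids231 A ∧ LTRMaximaBefore (k + 1) A) ↔ (Avoids231 A ∧ LTRMaximaBefore k A) ∨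
        (Avoids231 A ∧ (A ⟨k, Nat.lt_add_right d k.lt_succ_self⟩ : ℕ) = k + 1 + d - 1) := by
    obtain ⟨j, hj⟩ : ∃ j, (A j : ℕ) = k + 1 + d - 1 := ⟨A.symm ⟨k + d, by omega⟩, by simp⟩
    have hk : (A ⟨k, Nat.lt_add_right d k.lt_succ_self⟩ : ℕ) = k + 1 + d - 1 ↔ (j : ℕ) = k := by
      rw [← hj, ← Fin.ext_iff, A.injective.eq_iff, Fin.ext_iff, eq_comm]
    rw [LTRMaximaBefore, LTRMaximaBefore, forall_isLTRMax_lt_iff_of_val_eq _ hj,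
      forall_isLTRMax_lt_iff_of_val_eq _ hj, hk, ← and_or_left]
    exact and_congr_right fun _ => by omega
  have hdisj : Disjoint (fun A : Perm (Fin (k + 1 + d)) => Avoids231 A ∧ LTRMaximaBefore k A)
      (fun A => Avoids231 A ∧ (A ⟨k, Nat.lt_add_right d k.lt_succ_self⟩ : ℕ) = k + 1 + d - 1) := by
    simp only [Pi.disjoint_iff, Prop.disjoint_iff]
    rintro A ⟨⟨-, hbefore⟩, -, hmax⟩
    exact Nat.lt_irrefl k (hbefore _ (isLTRMax_of_val_eq hmax))
  rw [cardAvoids231LTRMaximaBefore, Nat.card_congr ((subtypeEquivRight key).trans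
    (subtypeOrEquiv _ _ hdisj)), Nat.card_sum, card_avoids231_val_eq_of_eq_add rfl _ rfl,
    card_avoids231, card_avoids231]
  rfl

lemma card_avoids231_winnable_val_eq_of_eq_add {N m n k : ℕ} (hN : N = m + 1 + n) (j : Fin N)
    (hj : (j : ℕ) = m) (hk : k ≤ m) :
    Nat.card {p : Perm (Fin N) // (Avoids231 p ∧ Winnable N k p) ∧ (p j : ℕ) = N - 1} =
      cardAvoids231LTRMaximaBefore m k * catalan n := by
  subst hN
  rw [show j = ⟨m, by omega⟩ from Fin.ext hj, ← card_avoids231]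
  refine card_eq_of_maxJoin (fun _ hp => ⟨hp.1.1, hp.2⟩) fun A B => ?_
  rw [avoids231_maxJoin_iff, winnable_maxJoin_iff, maxJoin_apply_of_eq rfl]
  simp only [hk, true_and, show m + n = m + 1 + n - 1 by omega, and_true]
  tauto

lemma card_avoids231_winnable_eq_sum (N k : ℕ) :
    Nat.card {p : Perm (Fin (N + 1)) // Avoids231 p ∧ Winnable (N + 1) k p} =
      ∑ j ∈ Ico k (N + 1), cardAvoids231LTRMaximaBefore j k * catalan (N - j) := by
  have hterm (j : Fin (N + 1)) :
      Nat.card {p : Perm (Fin (N + 1)) // (Avoids231 p ∧ Winnable (N + 1) k p) ∧ (p j : ℕ) = N} =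
        if k ≤ j then cardAvoids231LTRMaximaBefore j k * catalan (N - j) else 0 := by
    split_ifs with hk
    · exact card_avoids231_winnable_val_eq_of_eq_add (n := N - j) (by omega) j rfl hk
    · exact Nat.card_eq_zero.mpr
        (Or.inl ⟨fun p => hk ((winnable_iff_of_val_eq k p.2.2).mp p.2.1.2).1⟩)
  rw [card_eq_sum_card_val_eq_last, sum_congr rfl fun j _ => hterm j,
    Fin.sum_univ_eq_sum_range
      (fun j => if k ≤ j then cardAvoids231LTRMaximaBefore j k * catalan (N - j) else 0),
    ← sum_filter, range_eq_Ico, Ico_filter_le, max_eq_right (Nat.zero_le k)]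

lemma sum_Ico_catalan_mul_catalan {k N : ℕ} (h : k < N) :
    ∑ j ∈ Ico (k + 1) (N + 1), catalan (j - (k + 1)) * catalan (N - j) = catalan (N - k) := by
  obtain ⟨M, rfl⟩ := Nat.exists_eq_add_of_lt h
  rw [sum_Ico_eq_sum_range, show k + M + 1 - k = M + 1 by omega, catalan_succ,
    Fin.sum_univ_eq_sum_range (fun i => catalan i * catalan (M - i)),
    show k + M + 1 + 1 - (k + 1) = M + 1 by omega]
  refine sum_congr rfl fun t _ => ?_
  rw [show k + 1 + t - (k + 1) = t by omega, show k + M + 1 - (k + 1 + t) = M - t by omega]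

theorem card_avoids231_winnable {N k : ℕ} (hk : k ≤ N) :
    Nat.card {p : Perm (Fin (N + 1)) // Avoids231 p ∧ Winnable (N + 1) k p} = catalan N := by
  rw [card_avoids231_winnable_eq_sum]
  induction k with
  | zero =>
    rw [sum_eq_sum_Ico_succ_bot N.succ_pos, cardAvoids231LTRMaximaBefore_of_le le_rfl,
      catalan_zero, one_mul, Nat.sub_zero, add_eq_left]
    refine sum_eq_zero fun j hj => ?_
    obtain ⟨j, rfl⟩ := Nat.exists_eq_add_of_lt (mem_Ico.mp hj).1
    rw [zero_add, cardAvoids231LTRMaximaBefore_succ_zero, zero_mul]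
  | succ k ih =>
    have hstep (j) (hj : j ∈ Ico (k + 1) (N + 1)) :
        cardAvoids231LTRMaximaBefore j (k + 1) * catalan (N - j) =
          cardAvoids231LTRMaximaBefore j k * catalan (N - j) +
            catalan k * (catalan (j - (k + 1)) * catalan (N - j)) := by
      obtain ⟨d, rfl⟩ := Nat.exists_eq_add_of_le (mem_Ico.mp hj).1
      rw [cardAvoids231LTRMaximaBefore_succ, Nat.add_sub_cancel_left]
      ring
    rw [← ih (by omega), sum_eq_sum_Ico_succ_bot (by omega : k < N + 1),
      cardAvoids231LTRMaximaBefore_of_le le_rfl, sum_congr rfl hstep, sum_add_distrib, ← mul_sum,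
      sum_Ico_catalan_mul_catalan (by omega), add_comm]

lemma catalan_pos (n : ℕ) : 0 < catalan n :=
  Nat.pos_of_ne_zero fun h => n.centralBinom_ne_zero <| by
    rw [← succ_mul_catalan_eq_centralBinom, h, mul_zero]

lemma add_two_mul_catalan_succ (n : ℕ) :
    (n + 2) * catalan (n + 1) = 2 * (2 * n + 1) * catalan n := by
  have h := Nat.succ_mul_centralBinom_succ n
  rw [← succ_mul_catalan_eq_centralBinom, ← succ_mul_catalan_eq_centralBinom] at h
  refine Nat.eq_of_mul_eq_mul_left (by omega : 0 < n + 1) ?_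
  linear_combination h

lemma catalan_div_catalan_succ (n : ℕ) :
    (catalan n : ℝ) / catalan (n + 1) = 1 / 4 + 3 / (8 * n + 4) := by
  have h : ((n : ℝ) + 2) * catalan (n + 1) = 2 * (2 * n + 1) * catalan n := by
    exact_mod_cast add_two_mul_catalan_succ n
  have hpos : (0 : ℝ) < catalan (n + 1) := by exact_mod_cast catalan_pos (n + 1)
  rw [div_eq_iff hpos.ne']
  field_simp
  linear_combination (-8) * h

open Filter Topology in
lemma tendsto_catalan_div_catalan_succ :
    Tendsto (fun n => (catalan n : ℝ) / catalan (n + 1)) atTop (𝓝 (1 / 4)) := by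
  simp_rw [catalan_div_catalan_succ]
  have hden : Tendsto (fun n : ℕ => 8 * (n : ℝ) + 4) atTop atTop :=
    tendsto_atTop_add_const_right _ _ (tendsto_natCast_atTop_atTop.const_mul_atTop (by norm_num))
  simpa using tendsto_const_nhds.add (tendsto_const_nhds.div_atTop hden)

/-- For a uniformly random 231-avoiding permutation of size `N`, the probability
that the `k`-positional strategy wins is `C_{N-1}/C_N` (for any `0 ≤ k ≤ N-1`),
and this probability tends to `1/4` as `N → ∞`. -/
theorem prob_win_avoids231 :
    (∀ N k : ℕ, 1 ≤ N → k ≤ N - 1 →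
      (Nat.card {p : Equiv.Perm (Fin N) // Avoids231 p ∧ Winnable N k p} : ℝ) /
        (Nat.card {p : Equiv.Perm (Fin N) // Avoids231 p} : ℝ) =
          (catalan (N - 1) : ℝ) / (catalan N : ℝ)) ∧
    Filter.Tendsto (fun N : ℕ => (catalan (N - 1) : ℝ) / (catalan N : ℝ))
      Filter.atTop (nhds (1 / 4)) := by
  refine ⟨fun N k hN hk => ?_, (Filter.tendsto_add_atTop_iff_nat 1).mp ?_⟩
  · obtain ⟨N, rfl⟩ := Nat.exists_eq_add_of_le' hN
    rw [card_avoids231_winnable (N := N) (by omega), card_avoids231, Nat.add_sub_cancel]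
  · simpa using tendsto_catalan_div_catalan_succ
end

section
/- Define S_i(N) to be the number of Dyck paths from (0,0) to (N,N) for which column N-i lies weakly right of the next-to-last northeast corner and strictly left of the last northeast corner. Then S_i(N) = i·T_i(N) + S_{i-1}(N-1) for i ≥ 2, with S_1(N) = C_{N-1}. -/
/-!
Cut a Dyck path of size `N` at its last north step, `w = X N E^r`. The corners of `w` are those
of `X` together with the last one, in column `#E(X) + 1 = N - r + 1`; hence column `N - i` lies in
the window exactly when `r ≤ i` and every corner of `X` lies in a column `≤ N - i`.

For `i = 1` this just says that `X` is a Dyck path of size `N - 1`. For `i ≥ 2`, either `X` ends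
with a north step, `X = Y N`, and `Y N E^(r-1)` is a path counted by `S_{i-1}(N-1)`; or `X` ends
with an east step, and then the corner condition forces `X = A E^(i+1-r)` with `A` an arbitrary
partial Dyck path to `(N-1-i, N-1)`, while `r` ranges over `1, …, i`.
-/

def IsPrefixDyck (w : List Bool) : Prop :=
  ∀ t : ℕ, (w.take t).count false ≤ (w.take t).count true

/-- `w` is (the step word of) a Dyck path of size `N`. -/
def IsDyck (N : ℕ) (w : List Bool) : Prop :=
  w.length = 2 * N ∧ w.count false = N ∧ IsPrefixDyck w

/-- The set of columns of northeast corners of `w` (the column is the number of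
east steps up to and including the east step of the corner). -/
def cornerCols (w : List Bool) : Set ℕ :=
  {c | ∃ t : ℕ, w[t]? = some true ∧ w[t + 1]? = some false ∧
    c = (w.take (t + 2)).count false}

/-- Column `m` lies weakly right of the next-to-last northeast corner and strictly
left of the last northeast corner: there is a corner in a column `> m` and every
other corner is in a column `≤ m`. -/
def WinCol (m : ℕ) (w : List Bool) : Prop :=
  ∃ c ∈ cornerCols w, m < c ∧ ∀ c' ∈ cornerCols w, c' ≠ c → c' ≤ m

/-- The number of partial Dyck paths from `(0,0)` to `(a,b)`. -/
noncomputable def partialDyckCount (a b : ℕ) : ℕ :=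
  Nat.card {w : List Bool // w.length = a + b ∧ w.count false = a ∧ IsPrefixDyck w}

/-- `T_i(N)`: the number of partial Dyck paths from `(0,0)` to `(N-1-i, N-1)`. -/
noncomputable def T (i N : ℕ) : ℕ := partialDyckCount (N - 1 - i) (N - 1)

/-- `S_i(N)`: the number of Dyck paths of size `N` for which column `N-i` lies
weakly right of the next-to-last northeast corner and strictly left of the last. -/
noncomputable def S (i N : ℕ) : ℕ :=
  Nat.card {w : List Bool // IsDyck N w ∧ WinCol (N - i) w}

open List

theorem replicate_false_append_true_cons_inj {s s' : ℕ} {u u' : List Bool}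
    (h : replicate s false ++ true :: u = replicate s' false ++ true :: u') : s = s' ∧ u = u' := by
  induction s generalizing s' with
  | zero => cases s' <;> simp_all [replicate_succ]
  | succ s ih =>
    cases s' with
    | zero => simp [replicate_succ] at h
    | succ s' =>
      simp only [replicate_succ, cons_append, cons.injEq, true_and] at h
      simpa using ih h

theorem append_true_cons_replicate_inj {Y Y' : List Bool} {s s' : ℕ}
    (h : Y ++ true :: replicate s false = Y' ++ true :: replicate s' false) :
    Y = Y' ∧ s = s' := by
  have h' := congrArg reverse h
  simp only [reverse_append, reverse_cons, reverse_replicate, append_assoc, singleton_append] at h'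
  obtain ⟨rfl, hY⟩ := replicate_false_append_true_cons_inj h'
  exact ⟨reverse_injective hY, rfl⟩

theorem exists_eq_append_true_cons_replicate {l : List Bool} (h : true ∈ l) :
    ∃ Y s, l = Y ++ true :: replicate s false := by
  induction l with
  | nil => simp at h
  | cons a l ih =>
    by_cases hl : true ∈ l
    · obtain ⟨Y, s, rfl⟩ := ih hl
      exact ⟨a :: Y, s, rfl⟩
    · have ha : a = true := by simpa [hl] using h
      refine ⟨[], l.length, ?_⟩
      simpa [ha, eq_replicate_iff] using hl

theorem IsPrefixDyck.of_append {X Y : List Bool} (h : IsPrefixDyck (X ++ Y)) : IsPrefixDyck X := by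
  intro t
  rcases le_total t X.length with ht | ht
  · simpa [take_append, Nat.sub_eq_zero_of_le ht] using h t
  · simpa [take_of_length_le ht] using h X.length

theorem IsPrefixDyck.count_false_le {X : List Bool} (h : IsPrefixDyck X) :
    X.count false ≤ X.count true := by
  simpa using h X.length

theorem isPrefixDyck_append_singleton {X : List Bool} {b : Bool} :
    IsPrefixDyck (X ++ [b]) ↔
      IsPrefixDyck X ∧ (X ++ [b]).count false ≤ (X ++ [b]).count true := by
  refine ⟨fun h => ⟨h.of_append, h.count_false_le⟩, fun ⟨hX, hb⟩ t => ?_⟩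
  rcases le_or_gt t X.length with ht | ht
  · simpa [take_append, Nat.sub_eq_zero_of_le ht] using hX t
  · rwa [take_of_length_le (by simpa using ht)]

theorem IsPrefixDyck.append_replicate_false {X : List Bool} (h : IsPrefixDyck X) {k : ℕ}
    (hk : X.count false + k ≤ X.count true) : IsPrefixDyck (X ++ replicate k false) := by
  induction k with
  | zero => simpa using h
  | succ k ih =>
    rw [replicate_succ', ← append_assoc, isPrefixDyck_append_singleton]
    refine ⟨ih (by omega), ?_⟩
    simpa [count_replicate, add_assoc] using hk

theorem IsDyck.count_true {n : ℕ} {w : List Bool} (h : IsDyck n w) : w.count true = n := by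
  have := count_false_add_count_true w
  have := h.1
  have := h.2.1
  omega

theorem isDyck_append_true_cons_replicate_iff {N r : ℕ} {X : List Bool} :
    IsDyck N (X ++ true :: replicate r false) ↔
      IsPrefixDyck X ∧ X.count true + 1 = N ∧ X.count false + r = N := by
  have hlen := count_false_add_count_true X
  have hcf : (X ++ [true]).count false = X.count false := by simp
  have hct : (X ++ [true]).count true = X.count true + 1 := by simp
  rw [IsDyck, ← singleton_append, ← append_assoc, length_append, length_append, length_singleton,
    length_replicate, count_append, hcf, count_replicate_self]
  constructor
  · rintro ⟨hlength, hcount, hpre⟩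
    exact ⟨hpre.of_append.of_append, by omega, by omega⟩
  · rintro ⟨hX, hN, hr⟩
    refine ⟨by omega, by omega, IsPrefixDyck.append_replicate_false ?_ (by omega)⟩
    exact isPrefixDyck_append_singleton.mpr ⟨hX, by omega⟩

theorem cornerCols_nil : cornerCols [] = ∅ := by
  simp [cornerCols]

theorem cornerCols_false_cons (w : List Bool) :
    cornerCols (false :: w) = (· + 1) '' cornerCols w := by
  ext c
  simp only [cornerCols, Set.mem_image, Set.mem_ofPred_eq]
  constructor
  · rintro ⟨_ | t, h1, h2, rfl⟩
    · simp at h1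
    · exact ⟨_, ⟨t, by simpa using h1, by simpa using h2, rfl⟩, by simp [take_succ_cons]⟩
  · rintro ⟨_, ⟨t, h1, h2, rfl⟩, rfl⟩
    exact ⟨t + 1, by simpa using h1, by simpa using h2, by simp [take_succ_cons]⟩

theorem cornerCols_true_cons (w : List Bool) :
    cornerCols (true :: w) = cornerCols w ∪ {c | w.head? = some false ∧ c = 1} := by
  ext c
  simp only [cornerCols, Set.mem_union, Set.mem_ofPred_eq]
  constructor
  · rintro ⟨_ | t, h1, h2, rfl⟩
    · right
      cases w <;> simp_all
    · left
      exact ⟨t, by simpa using h1, by simpa using h2, by simp [take_succ_cons]⟩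
  · rintro (⟨t, h1, h2, rfl⟩ | ⟨h, rfl⟩)
    · exact ⟨t + 1, by simpa using h1, by simpa using h2, by simp [take_succ_cons]⟩
    · refine ⟨0, rfl, ?_, ?_⟩ <;> cases w <;> simp_all

theorem cornerCols_replicate_false (k : ℕ) : cornerCols (replicate k false) = ∅ := by
  induction k with
  | zero => exact cornerCols_nil
  | succ k ih => rw [replicate_succ, cornerCols_false_cons, ih, Set.image_empty]

theorem cornerCols_true_cons_replicate_false (k : ℕ) :
    cornerCols (true :: replicate k false) = if k = 0 then ∅ else {1} := by
  rw [cornerCols_true_cons, cornerCols_replicate_false]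
  cases k <;> simp [replicate_succ]

theorem cornerCols_append_true_cons (X Z : List Bool) :
    cornerCols (X ++ true :: Z) =
      cornerCols X ∪ (X.count false + ·) '' cornerCols (true :: Z) := by
  induction X with
  | nil => simp [cornerCols_nil]
  | cons b X ih =>
    cases b
    · rw [cons_append, cornerCols_false_cons, cornerCols_false_cons, ih, Set.image_union,
        Set.image_image, count_cons_self]
      congr 2
      funext x
      omega
    · have hhead : (X ++ true :: Z).head? = some false ↔ X.head? = some false := by
        cases X <;> simp
      rw [cons_append, cornerCols_true_cons, cornerCols_true_cons, ih, Set.union_right_comm,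
        count_cons_of_ne (by decide)]
      simp only [hhead]

theorem le_count_false_of_mem_cornerCols {X : List Bool} {c : ℕ} (hc : c ∈ cornerCols X) :
    c ≤ X.count false := by
  obtain ⟨t, -, -, rfl⟩ := hc
  exact (take_sublist _ _).count_le _

theorem cornerCols_append_true (X : List Bool) : cornerCols (X ++ [true]) = cornerCols X := by
  have h := cornerCols_true_cons_replicate_false 0
  rw [replicate_zero, if_pos rfl] at h
  rw [cornerCols_append_true_cons, h, Set.image_empty, Set.union_empty]

theorem cornerCols_append_true_cons_replicate_false (X : List Bool) {r : ℕ} (hr : r ≠ 0) :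
    cornerCols (X ++ true :: replicate r false) = insert (X.count false + 1) (cornerCols X) := by
  rw [cornerCols_append_true_cons, cornerCols_true_cons_replicate_false, if_neg hr,
    Set.image_singleton, Set.union_singleton]

theorem le_of_mem_cornerCols_append_replicate_false {A : List Bool} {k c : ℕ}
    (hc : c ∈ cornerCols (A ++ replicate k false)) : c ≤ A.count false + 1 := by
  by_cases hA : true ∈ A
  · obtain ⟨Y, s, rfl⟩ := exists_eq_append_true_cons_replicate hA
    rw [append_assoc, cons_append, ← replicate_add, cornerCols_append_true_cons,
      cornerCols_true_cons_replicate_false] at hc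
    have : Y.count false ≤ (Y ++ true :: replicate s false).count false := by simp
    split_ifs at hc
    · simp only [Set.image_empty, Set.union_empty] at hc
      have := le_count_false_of_mem_cornerCols hc
      omega
    · rcases hc with hc | ⟨_, rfl, rfl⟩
      · have := le_count_false_of_mem_cornerCols hc
        omega
      · dsimp only
        omega
  · have hA' : A = replicate A.length false :=
      eq_replicate_iff.mpr ⟨rfl, fun b hb => by cases b <;> simp_all⟩
    rw [hA', ← replicate_add, cornerCols_replicate_false] at hc
    exact hc.elim

theorem exists_eq_append_replicate_false_of_cornerCols_le {Y : List Bool} {s m k : ℕ}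
    (hs : s ≠ 0) (hcorner : ∀ c ∈ cornerCols (Y ++ true :: replicate s false), c ≤ m)
    (hk : (Y ++ true :: replicate s false).count false = m + k) :
    ∃ A, Y ++ true :: replicate s false = A ++ replicate (k + 1) false := by
  have hlast := hcorner _ ((cornerCols_append_true_cons_replicate_false Y hs).symm ▸
    Set.mem_insert _ _)
  have hcount : (Y ++ true :: replicate s false).count false = Y.count false + s := by simp
  refine ⟨Y ++ true :: replicate (s - (k + 1)) false, ?_⟩
  rw [append_assoc, cons_append, ← replicate_add, Nat.sub_add_cancel (by omega)]

theorem winCol_append_true_cons_replicate_false_iff {X : List Bool} {r m : ℕ} (hr : r ≠ 0) :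
    WinCol m (X ++ true :: replicate r false) ↔
      m ≤ X.count false ∧ ∀ c ∈ cornerCols X, c ≤ m := by
  simp only [WinCol, cornerCols_append_true_cons_replicate_false X hr, Set.mem_insert_iff,
    forall_eq_or_imp]
  constructor
  · rintro ⟨c, hc | hc, hmc, hlast, hX⟩
    · subst hc
      refine ⟨by omega, fun c' hc' => hX c' hc' ?_⟩
      have := le_count_false_of_mem_cornerCols hc'
      omega
    · have := le_count_false_of_mem_cornerCols hc
      have := hlast (by omega)
      omega
  · rintro ⟨hm, hX⟩
    exact ⟨_, Or.inl rfl, by omega, fun h => (h rfl).elim, fun c' hc' _ => hX c' hc'⟩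

def boolEquivDyckStep : Bool ≃ DyckStep where
  toFun b := if b then .U else .D
  invFun s := s = .U
  left_inv b := by cases b <;> rfl
  right_inv s := by cases s <;> rfl

theorem count_map_boolEquivDyckStep (l : List Bool) (b : Bool) :
    (l.map boolEquivDyckStep).count (boolEquivDyckStep b) = l.count b :=
  count_map_of_injective _ _ boolEquivDyckStep.injective b

theorem count_map_boolEquivDyckStep_symm (l : List DyckStep) (s : DyckStep) :
    (l.map boolEquivDyckStep.symm).count (boolEquivDyckStep.symm s) = l.count s :=
  count_map_of_injective _ _ boolEquivDyckStep.symm.injective s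

def isDyckEquivDyckWord (n : ℕ) :
    {w : List Bool // IsDyck n w} ≃ {p : DyckWord // p.semilength = n} where
  toFun w :=
    ⟨{ toList := w.1.map boolEquivDyckStep
       count_U_eq_count_D := by
         rw [← show boolEquivDyckStep true = .U from rfl,
           ← show boolEquivDyckStep false = .D from rfl, count_map_boolEquivDyckStep,
           count_map_boolEquivDyckStep, w.2.count_true, w.2.2.1]
       count_D_le_count_U := fun t => by
         rw [← map_take, ← show boolEquivDyckStep true = .U from rfl,
           ← show boolEquivDyckStep false = .D from rfl, count_map_boolEquivDyckStep,
           count_map_boolEquivDyckStep]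
         exact w.2.2.2 t },
      (count_map_boolEquivDyckStep _ true).trans w.2.count_true⟩
  invFun p :=
    ⟨p.1.toList.map boolEquivDyckStep.symm, by
      refine ⟨by rw [length_map, ← p.1.two_mul_semilength_eq_length, p.2], ?_, fun t => ?_⟩
      · rw [← show boolEquivDyckStep.symm .D = false from rfl,
          count_map_boolEquivDyckStep_symm, ← p.1.semilength_eq_count_D, p.2]
      · rw [← map_take, ← show boolEquivDyckStep.symm .D = false from rfl,
          ← show boolEquivDyckStep.symm .U = true from rfl, count_map_boolEquivDyckStep_symm,
          count_map_boolEquivDyckStep_symm]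
        exact p.1.count_D_le_count_U t⟩
  left_inv w := Subtype.ext (by simp [map_map])
  right_inv p := Subtype.ext (DyckWord.ext (by simp [map_map]))

theorem ncard_isDyck (n : ℕ) : {w : List Bool | IsDyck n w}.ncard = catalan n := by
  change Nat.card {w // IsDyck n w} = _
  rw [Nat.card_congr (isDyckEquivDyckWord n), Nat.card_eq_fintype_card,
    DyckWord.card_dyckWord_semilength_eq_catalan]

def attachLastPeak (q : List Bool × ℕ) : List Bool := q.1 ++ true :: replicate q.2 false

theorem attachLastPeak_injective : Function.Injective attachLastPeak := fun _ _ h => by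
  obtain ⟨h1, h2⟩ := append_true_cons_replicate_inj h
  exact Prod.ext h1 h2

/-- A Dyck path `X N E^r` of size `N` is recorded by the pair `(X, r)`; these are the pairs
whose path has column `N - i` in the window of `S i N`. -/
def lastPeakSplits (i N : ℕ) : Set (List Bool × ℕ) :=
  {q | IsPrefixDyck q.1 ∧ q.1.count true + 1 = N ∧ q.1.count false + q.2 = N ∧ q.2 ≤ i ∧
    ∀ c ∈ cornerCols q.1, c ≤ N - i}

theorem mem_lastPeakSplits {i N r : ℕ} {X : List Bool} :
    (X, r) ∈ lastPeakSplits i N ↔ IsPrefixDyck X ∧ X.count true + 1 = N ∧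
      X.count false + r = N ∧ r ≤ i ∧ ∀ c ∈ cornerCols X, c ≤ N - i :=
  Iff.rfl

theorem lastPeakSplits_finite (i N : ℕ) : (lastPeakSplits i N).Finite := by
  refine ((List.finite_length_le Bool (2 * N)).prod (Set.finite_Iic N)).subset ?_
  rintro ⟨X, r⟩ hq
  obtain ⟨-, hct, hcf, -⟩ := mem_lastPeakSplits.mp hq
  have := count_false_add_count_true X
  exact ⟨show X.length ≤ 2 * N by omega, show r ≤ N by omega⟩

theorem S_eq_ncard_lastPeakSplits {i N : ℕ} (hi : 1 ≤ i) (hiN : i ≤ N) :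
    S i N = (lastPeakSplits i N).ncard := by
  change Set.ncard {w : List Bool | IsDyck N w ∧ WinCol (N - i) w} = _
  rw [← Set.ncard_image_of_injective _ attachLastPeak_injective]
  congr 1
  ext w
  constructor
  · rintro ⟨hD, hW⟩
    have hw : true ∈ w := count_pos_iff.mp (by rw [hD.count_true]; omega)
    obtain ⟨X, r, rfl⟩ := exists_eq_append_true_cons_replicate hw
    obtain ⟨hX, hct, hcf⟩ := isDyck_append_true_cons_replicate_iff.mp hD
    have := hX.count_false_le
    obtain ⟨hm, hcorner⟩ := (winCol_append_true_cons_replicate_false_iff (by omega)).mp hW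
    exact ⟨(X, r), ⟨hX, hct, hcf, by omega, hcorner⟩, rfl⟩
  · rintro ⟨⟨X, r⟩, ⟨hX, hct, hcf, hri, hcorner⟩, rfl⟩
    have := hX.count_false_le
    exact ⟨isDyck_append_true_cons_replicate_iff.mpr ⟨hX, hct, hcf⟩,
      (winCol_append_true_cons_replicate_false_iff (by omega)).mpr ⟨by omega, hcorner⟩⟩

theorem lastPeakSplits_one {N : ℕ} (hN : 1 ≤ N) :
    lastPeakSplits 1 N = (fun X => (X, 1)) '' {X | IsDyck (N - 1) X} := by
  ext ⟨X, r⟩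
  constructor
  · rintro hq
    obtain ⟨hX, hct, hcf, hr, -⟩ := mem_lastPeakSplits.mp hq
    have := hX.count_false_le
    have := count_false_add_count_true X
    exact ⟨X, ⟨by omega, by omega, hX⟩, by rw [show r = 1 by omega]⟩
  · rintro ⟨X, ⟨hlen, hcf, hX⟩, h⟩
    simp only [Prod.mk.injEq] at h
    obtain ⟨rfl, rfl⟩ := h
    have := count_false_add_count_true X
    exact mem_lastPeakSplits.mpr ⟨hX, by omega, by omega, le_rfl,
      fun c hc => (le_count_false_of_mem_cornerCols hc).trans (by omega)⟩

def partialDyckPaths (a b : ℕ) : Set (List Bool) :=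
  {w | w.length = a + b ∧ w.count false = a ∧ IsPrefixDyck w}

theorem mem_partialDyckPaths {a b : ℕ} {w : List Bool} :
    w ∈ partialDyckPaths a b ↔ w.length = a + b ∧ w.count false = a ∧ IsPrefixDyck w :=
  Iff.rfl

theorem mem_lastPeakSplits_append_true {i N r : ℕ} {Y : List Bool} (hi : 1 ≤ i) :
    (Y ++ [true], r + 1) ∈ lastPeakSplits i N ↔ (Y, r) ∈ lastPeakSplits (i - 1) (N - 1) := by
  rw [mem_lastPeakSplits, mem_lastPeakSplits, cornerCols_append_true,
    isPrefixDyck_append_singleton]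
  have h0 : [true].count false = 0 := rfl
  simp only [count_append, count_singleton_self, h0, add_zero]
  constructor
  · rintro ⟨⟨hY, -⟩, hct, hcf, hri, hcorner⟩
    exact ⟨hY, by omega, by omega, by omega, fun c hc => (hcorner c hc).trans (by omega)⟩
  · rintro ⟨hY, hct, hcf, hri, hcorner⟩
    have := hY.count_false_le
    exact ⟨⟨hY, by omega⟩, by omega, by omega, by omega,
      fun c hc => (hcorner c hc).trans (by omega)⟩

theorem mem_lastPeakSplits_append_replicate_false {i N r : ℕ} {A : List Bool} (hr : 1 ≤ r)
    (hri : r ≤ i) (hiN : i ≤ N - 1) :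
    (A ++ replicate (i - r + 1) false, r) ∈ lastPeakSplits i N ↔
      A ∈ partialDyckPaths (N - 1 - i) (N - 1) := by
  rw [mem_lastPeakSplits, mem_partialDyckPaths]
  have hcf : (A ++ replicate (i - r + 1) false).count false = A.count false + (i - r + 1) := by
    simp
  have hct : (A ++ replicate (i - r + 1) false).count true = A.count true := by
    simp [count_replicate]
  have hlen := count_false_add_count_true A
  rw [hcf, hct]
  constructor
  · rintro ⟨hA, hct, hcf, -⟩
    exact ⟨by omega, by omega, hA.of_append⟩
  · rintro ⟨hlen, hcf, hA⟩
    exact ⟨hA.append_replicate_false (by omega), by omega, by omega, hri,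
      fun c hc => (le_of_mem_cornerCols_append_replicate_false hc).trans (by omega)⟩

theorem lastPeakSplits_eq_union {i N : ℕ} (hi : 2 ≤ i) (hiN : i ≤ N - 1) :
    lastPeakSplits i N =
      (fun q : ℕ × List Bool => (q.2 ++ replicate (i - q.1 + 1) false, q.1)) ''
          (Set.Icc 1 i ×ˢ partialDyckPaths (N - 1 - i) (N - 1)) ∪
        (fun q : List Bool × ℕ => (q.1 ++ [true], q.2 + 1)) '' lastPeakSplits (i - 1) (N - 1) := by
  ext ⟨X, r⟩
  constructor
  · intro hXr
    obtain ⟨hX, hct, hcf, hri, hcorner⟩ := mem_lastPeakSplits.mp hXr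
    have hr := hX.count_false_le
    obtain ⟨Y, s, rfl⟩ := exists_eq_append_true_cons_replicate
      (count_pos_iff.mp (show 0 < X.count true by omega))
    rcases eq_or_ne s 0 with rfl | hs
    · obtain ⟨r, rfl⟩ : ∃ r', r = r' + 1 := ⟨r - 1, by omega⟩
      exact Or.inr ⟨(Y, r), (mem_lastPeakSplits_append_true (by omega)).mp hXr, rfl⟩
    · obtain ⟨A, hA⟩ :=
        exists_eq_append_replicate_false_of_cornerCols_le (k := i - r) hs hcorner (by omega)
      rw [hA] at hXr ⊢
      exact Or.inl ⟨(r, A), Set.mk_mem_prod ⟨by omega, hri⟩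
        ((mem_lastPeakSplits_append_replicate_false (by omega) hri hiN).mp hXr), rfl⟩
  · rintro (⟨⟨r', A⟩, ⟨hr, hA⟩, heq⟩ | ⟨⟨Y, r'⟩, hY, heq⟩) <;> rw [← heq]
    · exact (mem_lastPeakSplits_append_replicate_false hr.1 hr.2 hiN).mpr hA
    · exact (mem_lastPeakSplits_append_true (by omega)).mpr hY

theorem ncard_lastPeakSplits {i N : ℕ} (hi : 2 ≤ i) (hiN : i ≤ N - 1) :
    (lastPeakSplits i N).ncard = i * T i N + (lastPeakSplits (i - 1) (N - 1)).ncard := by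
  have hT : (partialDyckPaths (N - 1 - i) (N - 1)).Finite :=
    (List.finite_length_eq Bool _).subset fun w hw => hw.1
  rw [lastPeakSplits_eq_union hi hiN, Set.ncard_union_eq ?disj
      (((Set.finite_Icc 1 i).prod hT).image _) ((lastPeakSplits_finite _ _).image _),
    Set.ncard_image_of_injective _ ?injF, Set.ncard_image_of_injective _ ?injG, Set.ncard_prod,
    Set.ncard_Icc_nat, Nat.add_sub_cancel]
  · rfl
  case injF =>
    rintro ⟨r₁, A₁⟩ ⟨r₂, A₂⟩ h
    simp only [Prod.mk.injEq] at h
    obtain ⟨h₁, rfl⟩ := h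
    rw [append_cancel_right_eq] at h₁
    rw [h₁]
  case injG =>
    rintro ⟨Y₁, r₁⟩ ⟨Y₂, r₂⟩ h
    simpa using h
  case disj =>
    rw [Set.disjoint_left]
    rintro _ ⟨⟨r, A⟩, -, rfl⟩ ⟨⟨Y, r'⟩, -, h⟩
    simp only [Prod.mk.injEq] at h
    rw [replicate_succ', ← append_assoc] at h
    simpa using (append_inj' h.1 rfl).2

/-- `S_1(N) = C_{N-1}` and `S_i(N) = i·T_i(N) + S_{i-1}(N-1)` for `2 ≤ i ≤ N-1`. -/
theorem S_recurrence (N : ℕ) :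
    (1 ≤ N → S 1 N = catalan (N - 1)) ∧
    (∀ i : ℕ, 2 ≤ i → i ≤ N - 1 → S i N = i * T i N + S (i - 1) (N - 1)) := by
  refine ⟨fun hN => ?_, fun i hi hiN => ?_⟩
  · rw [S_eq_ncard_lastPeakSplits le_rfl hN, lastPeakSplits_one hN,
      Set.ncard_image_of_injective _ (Prod.mk_left_injective 1), ncard_isDyck]
  · rw [S_eq_ncard_lastPeakSplits (by omega) (by omega), ncard_lastPeakSplits hi hiN,
      S_eq_ncard_lastPeakSplits (by omega) (by omega)]
end
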